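/- arXiv:2003.02019 — 3 statements merged into one kernel-verified Lean document; each statement's English description precedes it below -/
import Mathlib

section
/- Let f : 𝔻 → 𝔻 be holomorphic and suppose there is a sequence (z_n) in 𝔻 with |z_n| → 1 such that f^h(z_n) = 1 + o((1-|z_n|)²) as n → ∞ (i.e. (f^h(z_n) - 1)/(1-|z_n|)² → 0). Then f ∈ Aut(𝔻). -/
open Complex Filter MeasureTheory Metric Set Topology

noncomputable section

/-- The open unit disk in `ℂ`. -/
def unitDisk : Set ℂ := {z : ℂ | ‖z‖ < 1}

/-- The Laplacian of a real-valued function on `ℂ ≅ ℝ²`. -/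
def lap (u : ℂ → ℝ) (z : ℂ) : ℝ :=
  fderiv ℝ (fun w => fderiv ℝ u w 1) z 1 +
  fderiv ℝ (fun w => fderiv ℝ u w Complex.I) z Complex.I

/-- The Gauss curvature `κ_λ = -Δ(log λ)/λ²` of a conformal pseudometric `λ(z)|dz|`. -/
def curv (lam : ℂ → ℝ) (z : ℂ) : ℝ :=
  -(lap (fun w => Real.log (lam w)) z) / (lam z) ^ 2

/-- A conformal pseudometric on the unit disk: continuous, nonnegative, and C² where positive. -/
structure IsConfPseudometric (lam : ℂ → ℝ) : Prop where
  cont : ContinuousOn lam unitDisk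
  nonneg : ∀ z ∈ unitDisk, 0 ≤ lam z
  smooth : ContDiffOn ℝ 2 lam {z : ℂ | z ∈ unitDisk ∧ 0 < lam z}

/-- The hyperbolic distortion `f^h(z) = (1-|z|²)|f'(z)|/(1-|f(z)|²)`. -/
def fh (f : ℂ → ℂ) (z : ℂ) : ℝ :=
  (1 - ‖z‖ ^ 2) * ‖deriv f z‖ / (1 - ‖f z‖ ^ 2)

/-- `f` is a holomorphic automorphism of the unit disk. -/
def IsDiskAutomorphism (f : ℂ → ℂ) : Prop :=
  DifferentiableOn ℂ f unitDisk ∧ Set.BijOn f unitDisk unitDisk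

/-!
For `w ∈ 𝔻`, `recentered f w = φ_{f w} ∘ f ∘ φ_{-w}` (with `φ_a = mobius a`) is a holomorphic
self-map of `𝔻` fixing `0` with `|(recentered f w)'(0)| = f^h(w)`. If `f` is not an automorphism,
the equality case of the Schwarz lemma shows that the Schwarz quotients
`q_w(ζ) = (recentered f w)(ζ) / ζ` are again self-maps of `𝔻`; moreover `|q_w(-w)| = |q_0(w)|`.
Schwarz–Pick for `q_0` between `0` and `w`, then for `q_w` between `-w` and `0`, gives
`1 - f^h(w) ≥ (1 - f^h(0)) (1 - |w|)² / 4` with `f^h(0) < 1`, so `(f^h(z_n) - 1) / (1 - |z_n|)²`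
stays below a negative constant and cannot tend to `0`.
-/

open ComplexConjugate

def mobius (a z : ℂ) : ℂ := (z - a) / (1 - conj a * z)

lemma unitDisk_eq_ball : unitDisk = ball (0 : ℂ) 1 := by
  ext z; simp [unitDisk]

lemma isOpen_unitDisk : IsOpen unitDisk := unitDisk_eq_ball ▸ isOpen_ball

lemma zero_mem_unitDisk : (0 : ℂ) ∈ unitDisk := by simp [unitDisk]

section Mobius

variable {a b z : ℂ}

lemma one_sub_conj_mul_ne_zero (ha : ‖a‖ < 1) (hz : ‖z‖ < 1) : 1 - conj a * z ≠ 0 := by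
  have hlt : ‖conj a * z‖ < 1 := by
    rw [norm_mul, Complex.norm_conj]
    exact mul_lt_one_of_nonneg_of_lt_one_left (norm_nonneg a) ha hz.le
  intro h
  rw [← sub_eq_zero.mp h, norm_one] at hlt
  exact hlt.false

lemma sq_norm_one_sub_conj_mul_sub_sq_norm_sub (a z : ℂ) :
    ‖1 - conj a * z‖ ^ 2 - ‖z - a‖ ^ 2 = (1 - ‖a‖ ^ 2) * (1 - ‖z‖ ^ 2) := by
  simp only [Complex.sq_norm, normSq_apply, sub_re, sub_im, mul_re, mul_im, one_re, one_im,
    conj_re, conj_im]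
  ring

lemma norm_mobius_lt_one (ha : ‖a‖ < 1) (hz : ‖z‖ < 1) : ‖mobius a z‖ < 1 := by
  have hpos : 0 < ‖1 - conj a * z‖ := norm_pos_iff.2 (one_sub_conj_mul_ne_zero ha hz)
  rw [mobius, norm_div, div_lt_one hpos]
  refine lt_of_pow_lt_pow_left₀ 2 hpos.le ?_
  have ha2 : ‖a‖ ^ 2 < 1 := pow_lt_one₀ (norm_nonneg a) ha two_ne_zero
  have hz2 : ‖z‖ ^ 2 < 1 := pow_lt_one₀ (norm_nonneg z) hz two_ne_zero
  nlinarith [sq_norm_one_sub_conj_mul_sub_sq_norm_sub a z, mul_pos (sub_pos.2 ha2) (sub_pos.2 hz2)]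

lemma mobius_self (a : ℂ) : mobius a a = 0 := by simp [mobius]

lemma mobius_neg_zero (a : ℂ) : mobius (-a) 0 = a := by simp [mobius]

lemma mobius_zero_left (z : ℂ) : mobius 0 z = z := by simp [mobius]

lemma mobius_neg_mobius (ha : ‖a‖ < 1) (hz : ‖z‖ < 1) : mobius (-a) (mobius a z) = z := by
  have hz' := one_sub_conj_mul_ne_zero ha hz
  have ha' := one_sub_conj_mul_ne_zero ha ha
  have hden : 1 - conj (-a) * mobius a z = (1 - conj a * a) / (1 - conj a * z) := by
    rw [mobius, map_neg]
    field_simp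
    ring
  have hz'' : 1 - z * conj a ≠ 0 := by rwa [mul_comm]
  rw [mobius, hden, div_eq_iff (div_ne_zero ha' hz'), mobius]
  field_simp
  ring

lemma mobius_mobius_neg (ha : ‖a‖ < 1) (hz : ‖z‖ < 1) : mobius a (mobius (-a) z) = z := by
  simpa using mobius_neg_mobius (a := -a) (by rwa [norm_neg]) hz

lemma norm_mobius_comm (a b : ℂ) : ‖mobius a b‖ = ‖mobius b a‖ := by
  have hden : 1 - conj b * a = conj (1 - conj a * b) := by simp [mul_comm]
  rw [mobius, mobius, norm_div, norm_div, norm_sub_rev, hden, Complex.norm_conj]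

lemma hasDerivAt_mobius (a : ℂ) (h : 1 - conj a * z ≠ 0) :
    HasDerivAt (mobius a) ((1 - conj a * a) / (1 - conj a * z) ^ 2) z := by
  have hnum : HasDerivAt (fun w : ℂ => w - a) 1 z := (hasDerivAt_id z).sub_const a
  have hden : HasDerivAt (fun w : ℂ => 1 - conj a * w) (-conj a) z := by
    simpa using ((hasDerivAt_id z).const_mul (conj a)).const_sub 1
  refine (hnum.div hden h).congr_deriv ?_
  field_simp
  ring

-- The strong triangle inequality `ρ(z, -b) ≤ (ρ(z, 0) + ρ(0, -b)) / (1 + ρ(z, 0) ρ(0, -b))`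
-- for the pseudo-hyperbolic distance `ρ(u, v) = ‖mobius v u‖`.
lemma norm_mobius_neg_mul_le (hb : ‖b‖ < 1) (hz : ‖z‖ < 1) :
    ‖mobius (-b) z‖ * (1 + ‖b‖ * ‖z‖) ≤ ‖b‖ + ‖z‖ := by
  have hD := one_sub_conj_mul_ne_zero (a := -b) (by rwa [norm_neg]) hz
  set D := ‖1 - conj (-b) * z‖ with hD_def
  have hDpos : 0 < D := norm_pos_iff.2 hD
  have hDle : D ≤ 1 + ‖b‖ * ‖z‖ := by
    simpa [hD_def, norm_neg] using norm_sub_le (1 : ℂ) (conj (-b) * z)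
  have hid := sq_norm_one_sub_conj_mul_sub_sq_norm_sub (-b) z
  rw [norm_neg, ← hD_def] at hid
  rw [mobius, norm_div, ← hD_def, div_mul_eq_mul_div, div_le_iff₀ hDpos]
  refine (pow_le_pow_iff_left₀ (by positivity) (by positivity) two_ne_zero).1 ?_
  have hP : 0 ≤ (1 - ‖b‖ ^ 2) * (1 - ‖z‖ ^ 2) :=
    mul_nonneg (sub_nonneg.2 (pow_le_one₀ (norm_nonneg b) hb.le))
      (sub_nonneg.2 (pow_le_one₀ (norm_nonneg z) hz.le))
  have hD2 : D ^ 2 ≤ (1 + ‖b‖ * ‖z‖) ^ 2 := pow_le_pow_left₀ hDpos.le hDle 2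
  nlinarith [mul_le_mul_of_nonneg_left hD2 hP]

lemma one_sub_norm_mul_le_of_norm_mobius_le {r : ℝ} (ha : ‖a‖ < 1) (hb : ‖b‖ < 1)
    (h : ‖mobius b a‖ ≤ r) : (1 - ‖b‖) * (1 - r) ≤ 2 * (1 - ‖a‖) := by
  have hc := norm_mobius_lt_one hb ha
  have htri := norm_mobius_neg_mul_le hb hc
  rw [mobius_neg_mobius hb ha] at htri
  have hbc : ‖b‖ * ‖mobius b a‖ ≤ 1 := mul_le_one₀ hb.le (norm_nonneg _) hc.le
  nlinarith [mul_nonneg (sub_nonneg.2 ha.le) (sub_nonneg.2 hbc),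
    mul_nonneg (sub_nonneg.2 hb.le) (sub_nonneg.2 h)]

end Mobius

section Automorphism

variable {f g : ℂ → ℂ}

lemma isDiskAutomorphism_mobius {a : ℂ} (ha : ‖a‖ < 1) : IsDiskAutomorphism (mobius a) := by
  have hmaps : ∀ {c : ℂ}, ‖c‖ < 1 → MapsTo (mobius c) unitDisk unitDisk :=
    fun hc _ hz => norm_mobius_lt_one hc hz
  have ha' : ‖-a‖ < 1 := by rwa [norm_neg]
  refine ⟨fun z hz => (hasDerivAt_mobius a (one_sub_conj_mul_ne_zero ha hz)).differentiableAt
    |>.differentiableWithinAt, ?_⟩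
  exact InvOn.bijOn ⟨fun z hz => mobius_neg_mobius ha hz, fun z hz => mobius_mobius_neg ha hz⟩
    (hmaps ha) (hmaps ha')

lemma isDiskAutomorphism_mul_left {c : ℂ} (hc : ‖c‖ = 1) : IsDiskAutomorphism (c * ·) := by
  have hc0 : c ≠ 0 := norm_ne_zero_iff.1 (by rw [hc]; exact one_ne_zero)
  have hmaps : ∀ {d : ℂ}, ‖d‖ = 1 → MapsTo (d * ·) unitDisk unitDisk := fun hd _ hz => by
    simpa [unitDisk, hd] using hz
  refine ⟨(differentiable_id.const_mul c).differentiableOn, InvOn.bijOn ?_ (hmaps hc)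
    (hmaps (by rw [norm_inv, hc, inv_one]))⟩
  exact ⟨fun z _ => inv_mul_cancel_left₀ hc0 z, fun z _ => mul_inv_cancel_left₀ hc0 z⟩

lemma IsDiskAutomorphism.comp (hf : IsDiskAutomorphism f)
    (hg : IsDiskAutomorphism g) : IsDiskAutomorphism (f ∘ g) :=
  ⟨hf.1.comp hg.1 hg.2.mapsTo, hf.2.comp hg.2⟩

lemma IsDiskAutomorphism.congr (hf : IsDiskAutomorphism f)
    (hfg : EqOn f g unitDisk) : IsDiskAutomorphism g :=
  ⟨hf.1.congr fun _ hz => (hfg hz).symm, hf.2.congr hfg⟩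

end Automorphism

section SchwarzPick

variable {g : ℂ → ℂ} {z : ℂ}

lemma norm_mobius_map_zero_le (hg : DifferentiableOn ℂ g unitDisk)
    (hmaps : MapsTo g unitDisk unitDisk) (hz : z ∈ unitDisk) :
    ‖mobius (g 0) (g z)‖ ≤ ‖z‖ := by
  have h0 : ‖g 0‖ < 1 := hmaps zero_mem_unitDisk
  have hφ := isDiskAutomorphism_mobius h0
  have hd : DifferentiableOn ℂ (mobius (g 0) ∘ g) (ball 0 1) := by
    rw [← unitDisk_eq_ball]; exact hφ.1.comp hg hmaps
  refine Complex.norm_le_norm_of_mapsTo_ball hd ?_ (mobius_self (g 0)) hz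
  rw [← unitDisk_eq_ball]
  exact (hφ.2.mapsTo.comp hmaps).mono_right (unitDisk_eq_ball ▸ ball_subset_closedBall)

lemma one_sub_norm_map_zero_mul_le (hg : DifferentiableOn ℂ g unitDisk)
    (hmaps : MapsTo g unitDisk unitDisk) (hz : z ∈ unitDisk) :
    (1 - ‖g 0‖) * (1 - ‖z‖) ≤ 2 * (1 - ‖g z‖) :=
  one_sub_norm_mul_le_of_norm_mobius_le (hmaps hz) (hmaps zero_mem_unitDisk)
    (norm_mobius_map_zero_le hg hmaps hz)

lemma one_sub_norm_map_mul_le (hg : DifferentiableOn ℂ g unitDisk)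
    (hmaps : MapsTo g unitDisk unitDisk) (hz : z ∈ unitDisk) :
    (1 - ‖g z‖) * (1 - ‖z‖) ≤ 2 * (1 - ‖g 0‖) :=
  one_sub_norm_mul_le_of_norm_mobius_le (hmaps zero_mem_unitDisk) (hmaps hz)
    ((norm_mobius_comm _ _).trans_le (norm_mobius_map_zero_le hg hmaps hz))

end SchwarzPick

def recentered (f : ℂ → ℂ) (w : ℂ) : ℂ → ℂ := mobius (f w) ∘ f ∘ mobius (-w)

section Recentered

variable {f : ℂ → ℂ} {w : ℂ}

lemma recentered_zero (f : ℂ → ℂ) (w : ℂ) : recentered f w 0 = 0 := by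
  simp [recentered, mobius_neg_zero, mobius_self]

lemma mapsTo_recentered (hmaps : MapsTo f unitDisk unitDisk) (hw : w ∈ unitDisk) :
    MapsTo (recentered f w) unitDisk unitDisk :=
  (isDiskAutomorphism_mobius (hmaps hw)).2.mapsTo.comp <|
    hmaps.comp (isDiskAutomorphism_mobius (by rwa [norm_neg])).2.mapsTo

lemma mapsTo_closedBall_recentered (hmaps : MapsTo f unitDisk unitDisk) (hw : w ∈ unitDisk) :
    MapsTo (recentered f w) (ball 0 1) (closedBall (recentered f w 0) 1) := by
  rw [recentered_zero, ← unitDisk_eq_ball]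
  exact (mapsTo_recentered hmaps hw).mono_right (unitDisk_eq_ball ▸ ball_subset_closedBall)

lemma differentiableOn_recentered (hf : DifferentiableOn ℂ f unitDisk)
    (hmaps : MapsTo f unitDisk unitDisk) (hw : w ∈ unitDisk) :
    DifferentiableOn ℂ (recentered f w) unitDisk := by
  have hψ := isDiskAutomorphism_mobius (a := -w) (by rwa [norm_neg])
  exact (isDiskAutomorphism_mobius (hmaps hw)).1.comp (hf.comp hψ.1 hψ.2.mapsTo)
    (hmaps.comp hψ.2.mapsTo)

lemma hasDerivAt_recentered (hf : DifferentiableOn ℂ f unitDisk)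
    (hmaps : MapsTo f unitDisk unitDisk) (hw : w ∈ unitDisk) :
    HasDerivAt (recentered f w) ((1 - conj w * w) * deriv f w / (1 - conj (f w) * f w)) 0 := by
  have hfw : ‖f w‖ < 1 := hmaps hw
  have hψ := hasDerivAt_mobius (-w) (z := 0) (by simp)
  have hf' : HasDerivAt f (deriv f w) (mobius (-w) 0) := by
    rw [mobius_neg_zero]
    exact (hf.differentiableAt (isOpen_unitDisk.mem_nhds hw)).hasDerivAt
  have hne := one_sub_conj_mul_ne_zero hfw hfw
  have hφ : HasDerivAt (mobius (f w))
      ((1 - conj (f w) * f w) / (1 - conj (f w) * f w) ^ 2) (f (mobius (-w) 0)) := by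
    rw [mobius_neg_zero]
    exact hasDerivAt_mobius (f w) hne
  refine (hφ.comp 0 (hf'.comp 0 hψ)).congr_deriv ?_
  simp only [map_neg, neg_mul_neg, mul_zero, sub_zero, one_pow, div_one]
  field_simp

lemma norm_deriv_recentered_zero (hf : DifferentiableOn ℂ f unitDisk)
    (hmaps : MapsTo f unitDisk unitDisk) (hw : w ∈ unitDisk) :
    ‖deriv (recentered f w) 0‖ = fh f w := by
  have hnorm : ∀ z : ℂ, ‖z‖ < 1 → ‖1 - conj z * z‖ = 1 - ‖z‖ ^ 2 := fun z hz => by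
    rw [Complex.conj_mul', ← ofReal_pow, ← ofReal_one, ← ofReal_sub, norm_real, Real.norm_eq_abs,
      abs_of_nonneg (sub_nonneg.2 (pow_le_one₀ (norm_nonneg z) hz.le))]
  rw [(hasDerivAt_recentered hf hmaps hw).deriv, fh, norm_div, norm_mul, hnorm w hw,
    hnorm (f w) (hmaps hw)]

lemma norm_dslope_recentered_neg (f : ℂ → ℂ) (w : ℂ) :
    ‖dslope (recentered f w) 0 (-w)‖ = ‖dslope (recentered f 0) 0 w‖ := by
  rcases eq_or_ne w 0 with rfl | hw
  · simp
  rw [dslope_of_ne _ (neg_ne_zero.2 hw), dslope_of_ne _ hw, slope_def_field, slope_def_field,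
    recentered_zero, recentered_zero]
  simp only [recentered, Function.comp_apply, mobius_self, neg_zero, mobius_zero_left,
    sub_zero, norm_div, norm_neg, norm_mobius_comm (f w)]

lemma differentiableOn_dslope_recentered (hf : DifferentiableOn ℂ f unitDisk)
    (hmaps : MapsTo f unitDisk unitDisk) (hw : w ∈ unitDisk) :
    DifferentiableOn ℂ (dslope (recentered f w) 0) unitDisk :=
  (differentiableOn_dslope (isOpen_unitDisk.mem_nhds zero_mem_unitDisk)).2
    (differentiableOn_recentered hf hmaps hw)

-- Equality in the Schwarz lemma makes `recentered f w` a rotation.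
lemma isDiskAutomorphism_of_norm_dslope_recentered_eq_one (hf : DifferentiableOn ℂ f unitDisk)
    (hmaps : MapsTo f unitDisk unitDisk) (hw : w ∈ unitDisk) {ζ : ℂ} (hζ : ζ ∈ unitDisk)
    (h : ‖dslope (recentered f w) 0 ζ‖ = 1) : IsDiskAutomorphism f := by
  set c := dslope (recentered f w) 0 ζ
  have hrot := Complex.affine_of_mapsTo_ball_of_norm_dslope_eq_div
    (unitDisk_eq_ball ▸ differentiableOn_recentered hf hmaps hw)
    (mapsTo_closedBall_recentered hmaps hw) (unitDisk_eq_ball ▸ hζ) (by rw [h, div_one])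
  have hfw : ‖f w‖ < 1 := hmaps hw
  refine ((isDiskAutomorphism_mobius (a := -f w) (by rwa [norm_neg])).comp
    ((isDiskAutomorphism_mul_left h).comp (isDiskAutomorphism_mobius hw))).congr fun u hu => ?_
  have hu' : mobius w u ∈ ball 0 1 := unitDisk_eq_ball ▸ norm_mobius_lt_one hw hu
  have hcu : recentered f w (mobius w u) = mobius w u * c := by
    simpa only [recentered_zero, sub_zero, zero_add, smul_eq_mul] using hrot hu'
  have hfu : recentered f w (mobius w u) = mobius (f w) (f u) := by
    simp only [recentered, Function.comp_apply, mobius_neg_mobius hw hu]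
  simp only [Function.comp_apply]
  rw [mul_comm, ← hcu, hfu, mobius_neg_mobius hfw (hmaps hu)]

lemma mapsTo_dslope_recentered (hf : DifferentiableOn ℂ f unitDisk)
    (hmaps : MapsTo f unitDisk unitDisk) (hnot : ¬IsDiskAutomorphism f) (hw : w ∈ unitDisk) :
    MapsTo (dslope (recentered f w) 0) unitDisk unitDisk := by
  intro ζ hζ
  have hle := Complex.norm_dslope_le_div_of_mapsTo_ball
    (unitDisk_eq_ball ▸ differentiableOn_recentered hf hmaps hw)
    (mapsTo_closedBall_recentered hmaps hw) (unitDisk_eq_ball ▸ hζ)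
  rw [div_one] at hle
  exact hle.lt_of_ne fun h =>
    hnot (isDiskAutomorphism_of_norm_dslope_recentered_eq_one hf hmaps hw hζ h)

lemma one_sub_fh_zero_mul_le (hf : DifferentiableOn ℂ f unitDisk)
    (hmaps : MapsTo f unitDisk unitDisk) (hnot : ¬IsDiskAutomorphism f) (hw : w ∈ unitDisk) :
    (1 - fh f 0) * (1 - ‖w‖) ^ 2 ≤ 4 * (1 - fh f w) := by
  have h0 := zero_mem_unitDisk
  have hw' : ‖-w‖ < 1 := by rwa [norm_neg]
  have h₀ := one_sub_norm_map_zero_mul_le (differentiableOn_dslope_recentered hf hmaps h0)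
    (mapsTo_dslope_recentered hf hmaps hnot h0) hw
  have h₁ := one_sub_norm_map_mul_le (differentiableOn_dslope_recentered hf hmaps hw)
    (mapsTo_dslope_recentered hf hmaps hnot hw) hw'
  rw [dslope_same, norm_deriv_recentered_zero hf hmaps h0] at h₀
  rw [dslope_same, norm_deriv_recentered_zero hf hmaps hw, norm_dslope_recentered_neg,
    norm_neg] at h₁
  have hr : 0 ≤ 1 - ‖w‖ := sub_nonneg.2 (le_of_lt hw)
  nlinarith [mul_le_mul_of_nonneg_right h₀ hr]

end Recentered

theorem boundary_schwarz_pick_general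
    (f : ℂ → ℂ) (hf : DifferentiableOn ℂ f unitDisk)
    (hmaps : Set.MapsTo f unitDisk unitDisk)
    (z : ℕ → ℂ) (hz : ∀ n, z n ∈ unitDisk)
    (ho : Tendsto (fun n => (fh f (z n) - 1) / (1 - ‖z n‖) ^ 2)
      atTop (𝓝 0)) :
    IsDiskAutomorphism f := by
  by_contra hnot
  have hfh0 : fh f 0 < 1 := by
    have h : ‖dslope (recentered f 0) 0 0‖ < 1 :=
      mapsTo_dslope_recentered hf hmaps hnot zero_mem_unitDisk zero_mem_unitDisk
    rwa [dslope_same, norm_deriv_recentered_zero hf hmaps zero_mem_unitDisk] at h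
  have hbound : ∀ n, (fh f (z n) - 1) / (1 - ‖z n‖) ^ 2 ≤ -((1 - fh f 0) / 4) := fun n => by
    have hpos : 0 < (1 - ‖z n‖) ^ 2 := pow_pos (sub_pos.2 (hz n)) 2
    rw [div_le_iff₀ hpos]
    linarith [one_sub_fh_zero_mul_le hf hmaps hnot (hz n)]
  linarith [le_of_tendsto' ho hbound]

/-- **The strong form of the Schwarz–Pick lemma at the boundary of the unit disk.**
If `f : 𝔻 → 𝔻` is holomorphic and `f^h(z_n) = 1 + o((1-|z_n|)²)` along a sequence
`(z_n)` in `𝔻` with `|z_n| → 1`, then `f ∈ Aut(𝔻)`. -/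
theorem boundary_schwarz_pick
    (f : ℂ → ℂ) (hf : DifferentiableOn ℂ f unitDisk)
    (hmaps : Set.MapsTo f unitDisk unitDisk)
    (z : ℕ → ℂ) (hz : ∀ n, z n ∈ unitDisk)
    (hz1 : Tendsto (fun n => ‖z n‖) atTop (𝓝 1))
    (ho : Tendsto (fun n => (fh f (z n) - 1) / (1 - ‖z n‖) ^ 2)
      atTop (𝓝 0)) :
    IsDiskAutomorphism f :=
  boundary_schwarz_pick_general f hf hmaps z hz ho
end
end

section
/- Let (f_n) be a sequence of holomorphic maps f_n : 𝔻 → 𝔻 and suppose there is a sequence (z_n) in 𝔻 with |z_n| → 1 such that f_n^h(z_n) = 1 + o((1-|z_n|)²) as n → ∞ (i.e. (f_n^h(z_n) - 1)/(1-|z_n|)² → 0). Then (a) f_n^h → 1 locally uniformly in 𝔻, and (b) every locally uniform subsequential limit of (f_n) is either an automorphism of 𝔻 or a constant of modulus 1. -/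
open Complex Filter MeasureTheory Metric Set Topology

noncomputable section

/-!
The Beardon–Minda hyperbolic difference quotient `G_w(z)` of a holomorphic self-map `f` of `𝔻`
is holomorphic in `z`, bounded by `1`, has modulus symmetric in `(z, w)`, and has modulus
`f^h(w)` on the diagonal. The Schwarz–Pick lemma applied to `G_w` and to `G_z` gives the
Harnack-type estimate `(1 - f^h(z)) (1 - ρ(z, w))² ≤ 4 (1 - f^h(w))`, `ρ` the pseudo-hyperbolic
distance. On `|z| ≤ r` we have `1 - ρ(z, z_n) ≥ (1 - r)(1 - |z_n|)/2`, so the hypothesis forces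
`1 - f_n^h → 0` uniformly there. A locally uniform limit `g` either reaches the unit circle, and
is then a unimodular constant by the maximum principle, or is a self-map of `𝔻` with
`g^h(0) = 1`, hence an automorphism by the equality case of the Schwarz lemma.
-/

open ComplexConjugate

namespace SchwarzPick

lemma unitDisk_eq_ball : unitDisk = ball (0 : ℂ) 1 := by
  ext z; simp [unitDisk]

lemma isOpen_unitDisk : IsOpen unitDisk := unitDisk_eq_ball ▸ isOpen_ball

lemma zero_mem_unitDisk : (0 : ℂ) ∈ unitDisk := by simp [unitDisk]

lemma mapsTo_or_eqOn_const {F : ℂ → ℂ} (hF : DifferentiableOn ℂ F unitDisk)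
    (hF1 : ∀ x ∈ unitDisk, ‖F x‖ ≤ 1) :
    MapsTo F unitDisk unitDisk ∨ ∃ c : ℂ, ‖c‖ = 1 ∧ EqOn F (fun _ => c) unitDisk := by
  by_cases hmaps : MapsTo F unitDisk unitDisk
  · exact Or.inl hmaps
  obtain ⟨x₀, hx₀, hx₀1⟩ : ∃ x₀ ∈ unitDisk, ‖F x₀‖ = 1 := by
    simp only [MapsTo, unitDisk, mem_ofPred_eq, not_forall, not_lt] at hmaps
    obtain ⟨x₀, hx₀, h⟩ := hmaps
    exact ⟨x₀, hx₀, le_antisymm (hF1 x₀ hx₀) h⟩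
  refine Or.inr ⟨F x₀, hx₀1, ?_⟩
  exact Complex.eqOn_of_isPreconnected_of_isMaxOn_norm
    (unitDisk_eq_ball ▸ (convex_ball 0 1).isPreconnected) isOpen_unitDisk hF hx₀
    fun x hx => (hF1 x hx).trans hx₀1.ge

lemma sq_norm_one_sub_conj_mul_sub_sq_norm_sub (z w : ℂ) :
    ‖1 - conj w * z‖ ^ 2 - ‖z - w‖ ^ 2 = (1 - ‖z‖ ^ 2) * (1 - ‖w‖ ^ 2) := by
  simp only [Complex.sq_norm, Complex.normSq_apply, Complex.sub_re, Complex.sub_im,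
    Complex.mul_re, Complex.mul_im, Complex.conj_re, Complex.conj_im, Complex.one_re,
    Complex.one_im]
  ring

lemma one_sub_mul_le_norm_one_sub_conj_mul (z w : ℂ) : 1 - ‖z‖ * ‖w‖ ≤ ‖1 - conj w * z‖ := by
  simpa [mul_comm] using norm_sub_norm_le (1 : ℂ) (conj w * z)

lemma norm_one_sub_conj_mul_le (z w : ℂ) : ‖1 - conj w * z‖ ≤ 1 + ‖z‖ * ‖w‖ := by
  simpa [mul_comm] using norm_sub_le (1 : ℂ) (conj w * z)

lemma norm_one_sub_conj_mul_pos {z w : ℂ} (hz : ‖z‖ < 1) (hw : ‖w‖ < 1) :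
    0 < ‖1 - conj w * z‖ :=
  lt_of_lt_of_le (by nlinarith [norm_nonneg z, norm_nonneg w])
    (one_sub_mul_le_norm_one_sub_conj_mul z w)

lemma norm_one_sub_conj_mul_comm (z w : ℂ) : ‖1 - conj w * z‖ = ‖1 - conj z * w‖ := by
  rw [← Complex.norm_conj]
  simp [mul_comm]

lemma norm_one_sub_conj_mul_self {w : ℂ} (hw : ‖w‖ < 1) : ‖1 - conj w * w‖ = 1 - ‖w‖ ^ 2 := by
  rw [Complex.conj_mul', ← Complex.ofReal_pow, ← Complex.ofReal_one, ← Complex.ofReal_sub,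
    Complex.norm_real, Real.norm_eq_abs, abs_of_pos (by nlinarith [norm_nonneg w])]

section Mobius

def diskMobius (a z : ℂ) : ℂ := (z - a) / (1 - conj a * z)

variable {a z : ℂ}

@[simp] lemma diskMobius_self (a : ℂ) : diskMobius a a = 0 := by simp [diskMobius]

@[simp] lemma diskMobius_neg_zero (a : ℂ) : diskMobius (-a) 0 = a := by simp [diskMobius]

lemma diskMobius_ne_zero (ha : ‖a‖ < 1) (hz : ‖z‖ < 1) (hne : z ≠ a) : diskMobius a z ≠ 0 :=
  div_ne_zero (sub_ne_zero.mpr hne) (norm_pos_iff.mp (norm_one_sub_conj_mul_pos hz ha))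

lemma norm_diskMobius_comm (a z : ℂ) : ‖diskMobius a z‖ = ‖diskMobius z a‖ := by
  rw [diskMobius, diskMobius, norm_div, norm_div, norm_sub_rev, norm_one_sub_conj_mul_comm]

lemma one_sub_sq_norm_diskMobius (ha : ‖a‖ < 1) (hz : ‖z‖ < 1) :
    1 - ‖diskMobius a z‖ ^ 2 = (1 - ‖z‖ ^ 2) * (1 - ‖a‖ ^ 2) / ‖1 - conj a * z‖ ^ 2 := by
  have hA := (norm_one_sub_conj_mul_pos hz ha).ne'
  rw [← sq_norm_one_sub_conj_mul_sub_sq_norm_sub, diskMobius, norm_div, div_pow,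
    one_sub_div (pow_ne_zero 2 hA)]

lemma norm_diskMobius_lt_one (ha : ‖a‖ < 1) (hz : ‖z‖ < 1) : ‖diskMobius a z‖ < 1 := by
  have hpos : 0 < (1 - ‖z‖ ^ 2) * (1 - ‖a‖ ^ 2) / ‖1 - conj a * z‖ ^ 2 := by
    have := norm_one_sub_conj_mul_pos hz ha
    have : 0 < 1 - ‖z‖ ^ 2 := by nlinarith [norm_nonneg z]
    have : 0 < 1 - ‖a‖ ^ 2 := by nlinarith [norm_nonneg a]
    positivity
  rw [← one_sub_sq_norm_diskMobius ha hz] at hpos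
  exact (sq_lt_one_iff₀ (norm_nonneg _)).mp (by linarith)

lemma mapsTo_diskMobius (ha : ‖a‖ < 1) : MapsTo (diskMobius a) unitDisk unitDisk :=
  fun _ hz => norm_diskMobius_lt_one ha hz

lemma diskMobius_neg_diskMobius (ha : ‖a‖ < 1) (hz : ‖z‖ < 1) :
    diskMobius (-a) (diskMobius a z) = z := by
  have hD := norm_pos_iff.mp (norm_one_sub_conj_mul_pos hz ha)
  have hN := norm_pos_iff.mp (norm_one_sub_conj_mul_pos ha ha)
  have hnum : diskMobius a z - -a = z * (1 - conj a * a) / (1 - conj a * z) := by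
    rw [diskMobius, eq_div_iff hD, sub_mul, div_mul_cancel₀ _ hD]
    ring
  have hden : 1 - conj (-a) * diskMobius a z = (1 - conj a * a) / (1 - conj a * z) := by
    rw [diskMobius, eq_div_iff hD, map_neg, sub_mul, neg_mul, neg_mul, mul_assoc,
      div_mul_cancel₀ _ hD]
    ring
  rw [diskMobius, hnum, hden, div_div_div_cancel_right₀ hD, mul_div_cancel_right₀ _ hN]

lemma bijOn_diskMobius (ha : ‖a‖ < 1) : BijOn (diskMobius a) unitDisk unitDisk := by
  have ha' : ‖-a‖ < 1 := by rwa [norm_neg]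
  refine InvOn.bijOn ⟨fun z hz => diskMobius_neg_diskMobius ha hz, fun z hz => ?_⟩
    (mapsTo_diskMobius ha) (mapsTo_diskMobius ha')
  simpa using diskMobius_neg_diskMobius ha' hz

lemma hasDerivAt_diskMobius (ha : ‖a‖ < 1) (hz : ‖z‖ < 1) :
    HasDerivAt (diskMobius a) ((1 - conj a * a) / (1 - conj a * z) ^ 2) z := by
  have hnum : HasDerivAt (fun w : ℂ => w - a) 1 z := (hasDerivAt_id z).sub_const a
  have hden : HasDerivAt (fun w : ℂ => 1 - conj a * w) (-conj a) z := by
    simpa using ((hasDerivAt_id z).const_mul (conj a)).const_sub 1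
  exact (hnum.div hden (norm_pos_iff.mp (norm_one_sub_conj_mul_pos hz ha))).congr_deriv (by ring)

lemma differentiableOn_diskMobius (ha : ‖a‖ < 1) :
    DifferentiableOn ℂ (diskMobius a) unitDisk :=
  fun _ hz => (hasDerivAt_diskMobius ha hz).differentiableAt.differentiableWithinAt

lemma norm_sub_norm_le_norm_diskMobius_mul (ha : ‖a‖ < 1) (hz : ‖z‖ < 1) :
    ‖a‖ - ‖z‖ ≤ ‖diskMobius a z‖ * (1 - ‖z‖ * ‖a‖) := by
  have hA := norm_one_sub_conj_mul_pos hz ha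
  rw [diskMobius, norm_div, div_mul_eq_mul_div, le_div_iff₀ hA]
  have hid := sq_norm_one_sub_conj_mul_sub_sq_norm_sub z a
  have hlow : (1 - ‖z‖ * ‖a‖) ^ 2 ≤ ‖1 - conj a * z‖ ^ 2 :=
    pow_le_pow_left₀ (by nlinarith [norm_nonneg z, norm_nonneg a])
      (one_sub_mul_le_norm_one_sub_conj_mul z a) 2
  have hsq : ((‖a‖ - ‖z‖) * ‖1 - conj a * z‖) ^ 2 ≤ (‖z - a‖ * (1 - ‖z‖ * ‖a‖)) ^ 2 := by
    have hfactor : (‖z - a‖ * (1 - ‖z‖ * ‖a‖)) ^ 2 - ((‖a‖ - ‖z‖) * ‖1 - conj a * z‖) ^ 2 =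
        (1 - ‖z‖ ^ 2) * (1 - ‖a‖ ^ 2) * (‖1 - conj a * z‖ ^ 2 - (1 - ‖z‖ * ‖a‖) ^ 2) := by
      rw [mul_pow, mul_pow, show ‖z - a‖ ^ 2 = ‖1 - conj a * z‖ ^ 2 -
        (1 - ‖z‖ ^ 2) * (1 - ‖a‖ ^ 2) by linarith]
      ring
    have hz2 : 0 ≤ 1 - ‖z‖ ^ 2 := by nlinarith [norm_nonneg z]
    have ha2 : 0 ≤ 1 - ‖a‖ ^ 2 := by nlinarith [norm_nonneg a]
    nlinarith [mul_nonneg (mul_nonneg hz2 ha2) (sub_nonneg.mpr hlow)]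
  have hrhs : 0 ≤ ‖z - a‖ * (1 - ‖z‖ * ‖a‖) :=
    mul_nonneg (norm_nonneg _) (by nlinarith [norm_nonneg z, norm_nonneg a])
  exact le_of_pow_le_pow_left₀ two_ne_zero hrhs hsq

lemma mul_one_sub_div_two_le_one_sub_norm_diskMobius (ha : ‖a‖ < 1) (hz : ‖z‖ < 1) :
    (1 - ‖z‖) * (1 - ‖a‖) / 2 ≤ 1 - ‖diskMobius a z‖ := by
  have hA := norm_one_sub_conj_mul_pos hz ha
  have hA_le : ‖1 - conj a * z‖ ^ 2 ≤ (1 + ‖z‖) * (1 + ‖a‖) := by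
    have h := norm_one_sub_conj_mul_le z a
    have hza : ‖z‖ * ‖a‖ ≤ 1 := by nlinarith [norm_nonneg z, norm_nonneg a]
    have : (1 + ‖z‖ * ‖a‖) ^ 2 ≤ (1 + ‖z‖) * (1 + ‖a‖) := by
      nlinarith [mul_nonneg (norm_nonneg z) (sub_nonneg.mpr ha.le),
        mul_nonneg (norm_nonneg a) (sub_nonneg.mpr hz.le),
        mul_nonneg (mul_nonneg (norm_nonneg z) (norm_nonneg a)) (sub_nonneg.mpr hza)]
    nlinarith [pow_le_pow_left₀ hA.le h 2]
  have hρ : (1 - ‖z‖) * (1 - ‖a‖) ≤ 1 - ‖diskMobius a z‖ ^ 2 := by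
    rw [one_sub_sq_norm_diskMobius ha hz, le_div_iff₀ (by positivity)]
    have : 0 ≤ (1 - ‖z‖) * (1 - ‖a‖) := mul_nonneg (by linarith) (by linarith)
    nlinarith [mul_le_mul_of_nonneg_left hA_le this]
  nlinarith [sq_nonneg (1 - ‖diskMobius a z‖)]

end Mobius

section DifferenceQuotient

variable {f : ℂ → ℂ} {w z : ℂ}

def recenter (f : ℂ → ℂ) (w : ℂ) : ℂ → ℂ := fun ζ => diskMobius (f w) (f (diskMobius (-w) ζ))

@[simp] lemma recenter_zero : recenter f w 0 = 0 := by simp [recenter]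

lemma recenter_diskMobius (hw : ‖w‖ < 1) (hz : ‖z‖ < 1) :
    recenter f w (diskMobius w z) = diskMobius (f w) (f z) := by
  rw [recenter, diskMobius_neg_diskMobius hw hz]

lemma mapsTo_recenter (hm : MapsTo f unitDisk unitDisk) (hw : w ∈ unitDisk) :
    MapsTo (recenter f w) unitDisk unitDisk :=
  (mapsTo_diskMobius (hm hw)).comp (hm.comp (mapsTo_diskMobius (by rwa [norm_neg])))

lemma differentiableOn_recenter (hf : DifferentiableOn ℂ f unitDisk)
    (hm : MapsTo f unitDisk unitDisk) (hw : w ∈ unitDisk) :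
    DifferentiableOn ℂ (recenter f w) unitDisk :=
  (differentiableOn_diskMobius (hm hw)).comp
    (hf.comp (differentiableOn_diskMobius (by rwa [norm_neg]))
      (mapsTo_diskMobius (by rwa [norm_neg])))
    (hm.comp (mapsTo_diskMobius (by rwa [norm_neg])))

lemma mapsTo_closedBall_recenter (hm : MapsTo f unitDisk unitDisk) (hw : w ∈ unitDisk) :
    MapsTo (recenter f w) (ball 0 1) (closedBall 0 1) := by
  rw [← unitDisk_eq_ball]
  exact (mapsTo_recenter hm hw).mono_right (unitDisk_eq_ball ▸ ball_subset_closedBall)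

lemma norm_deriv_recenter_zero (hf : DifferentiableOn ℂ f unitDisk)
    (hm : MapsTo f unitDisk unitDisk) (hw : w ∈ unitDisk) :
    ‖deriv (recenter f w) 0‖ = fh f w := by
  have hw' : ‖w‖ < 1 := hw
  have hfw : ‖f w‖ < 1 := hm hw
  have hinner := hasDerivAt_diskMobius (a := -w) (by rwa [norm_neg]) (z := 0) (by simp)
  have hf' := (hf.differentiableAt (isOpen_unitDisk.mem_nhds hw)).hasDerivAt
  have hchain := (hasDerivAt_diskMobius hfw hfw).comp_of_eq 0
    (hf'.comp_of_eq 0 hinner (diskMobius_neg_zero w).symm) (by simp)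
  rw [show recenter f w = diskMobius (f w) ∘ f ∘ diskMobius (-w) from rfl, hchain.deriv]
  simp only [map_neg, neg_mul_neg, mul_zero, sub_zero, one_pow, div_one, norm_mul, norm_div,
    norm_pow, norm_one_sub_conj_mul_self hfw, norm_one_sub_conj_mul_self hw', fh]
  have : 0 < 1 - ‖f w‖ ^ 2 := by nlinarith [norm_nonneg (f w)]
  field_simp

/-- Written as a slope of the recentred map at `0`, so that `norm_dslope_le_div_of_mapsTo_ball`
bounds it by `1` on the diagonal too. -/
def hypDiffQuot (f : ℂ → ℂ) (w z : ℂ) : ℂ := dslope (recenter f w) 0 (diskMobius w z)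

lemma differentiableOn_hypDiffQuot (hf : DifferentiableOn ℂ f unitDisk)
    (hm : MapsTo f unitDisk unitDisk) (hw : w ∈ unitDisk) :
    DifferentiableOn ℂ (hypDiffQuot f w) unitDisk :=
  ((differentiableOn_dslope (isOpen_unitDisk.mem_nhds zero_mem_unitDisk)).mpr
    (differentiableOn_recenter hf hm hw)).comp (differentiableOn_diskMobius hw)
    (mapsTo_diskMobius hw)

lemma norm_hypDiffQuot_le_one (hf : DifferentiableOn ℂ f unitDisk)
    (hm : MapsTo f unitDisk unitDisk) (hw : w ∈ unitDisk) (hz : z ∈ unitDisk) :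
    ‖hypDiffQuot f w z‖ ≤ 1 := by
  have := Complex.norm_dslope_le_div_of_mapsTo_ball
    (unitDisk_eq_ball ▸ differentiableOn_recenter hf hm hw)
    (by rw [recenter_zero]; exact mapsTo_closedBall_recenter hm hw)
    (unitDisk_eq_ball ▸ mapsTo_diskMobius hw hz)
  rwa [div_one] at this

lemma norm_hypDiffQuot_self (hf : DifferentiableOn ℂ f unitDisk)
    (hm : MapsTo f unitDisk unitDisk) (hw : w ∈ unitDisk) :
    ‖hypDiffQuot f w w‖ = fh f w := by
  rw [hypDiffQuot, diskMobius_self, dslope_same, norm_deriv_recenter_zero hf hm hw]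

lemma norm_hypDiffQuot_of_ne (hw : w ∈ unitDisk) (hz : z ∈ unitDisk) (hne : z ≠ w) :
    ‖hypDiffQuot f w z‖ = ‖diskMobius (f w) (f z)‖ / ‖diskMobius w z‖ := by
  rw [hypDiffQuot, dslope_of_ne _ (diskMobius_ne_zero hw hz hne), slope_def_field,
    recenter_zero, recenter_diskMobius hw hz, sub_zero, sub_zero, norm_div]

lemma norm_hypDiffQuot_comm (hw : w ∈ unitDisk) (hz : z ∈ unitDisk) :
    ‖hypDiffQuot f w z‖ = ‖hypDiffQuot f z w‖ := by
  rcases eq_or_ne z w with rfl | hne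
  · rfl
  rw [norm_hypDiffQuot_of_ne hw hz hne, norm_hypDiffQuot_of_ne hz hw hne.symm,
    norm_diskMobius_comm w, norm_diskMobius_comm (f w)]

theorem norm_diskMobius_le_of_mapsTo (hf : DifferentiableOn ℂ f unitDisk)
    (hm : MapsTo f unitDisk unitDisk) (hw : w ∈ unitDisk) (hz : z ∈ unitDisk) :
    ‖diskMobius (f w) (f z)‖ ≤ ‖diskMobius w z‖ := by
  rw [← recenter_diskMobius hw hz]
  exact Complex.norm_le_norm_of_mapsTo_ball
    (unitDisk_eq_ball ▸ differentiableOn_recenter hf hm hw)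
    (mapsTo_closedBall_recenter hm hw) recenter_zero
    (norm_diskMobius_lt_one hw hz)

lemma fh_le_one (hf : DifferentiableOn ℂ f unitDisk) (hm : MapsTo f unitDisk unitDisk)
    (hw : w ∈ unitDisk) : fh f w ≤ 1 :=
  norm_hypDiffQuot_self hf hm hw ▸ norm_hypDiffQuot_le_one hf hm hw hw

end DifferenceQuotient

section Distortion

lemma one_sub_mul_one_sub_le {a s t : ℝ} (ha : a ≤ 1) (hs : s ≤ 1) (ht : 0 ≤ t)
    (h : a - s ≤ t * (1 - s * a)) : (1 - s) * (1 - t) ≤ (1 + t) * (1 - a) := by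
  nlinarith [mul_nonneg (mul_nonneg ht (sub_nonneg.mpr ha)) (sub_nonneg.mpr hs)]

lemma one_sub_mul_one_sub_sq_le {a b s t : ℝ} (ha : a ≤ 1) (hb : b ≤ 1) (hs : s ≤ 1)
    (ht₀ : 0 ≤ t) (ht₁ : t ≤ 1) (has : a - s ≤ t * (1 - s * a))
    (hsb : s - b ≤ t * (1 - b * s)) : (1 - b) * (1 - t) ^ 2 ≤ 4 * (1 - a) :=
  calc (1 - b) * (1 - t) ^ 2 = (1 - b) * (1 - t) * (1 - t) := by ring
    _ ≤ (1 + t) * (1 - s) * (1 - t) :=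
      mul_le_mul_of_nonneg_right (one_sub_mul_one_sub_le hs hb ht₀ hsb) (by linarith)
    _ = (1 + t) * ((1 - s) * (1 - t)) := by ring
    _ ≤ (1 + t) * ((1 + t) * (1 - a)) :=
      mul_le_mul_of_nonneg_left (one_sub_mul_one_sub_le ha hs ht₀ has) (by linarith)
    _ ≤ 4 * (1 - a) := by
      nlinarith [mul_nonneg (sub_nonneg.mpr ha) (mul_nonneg (sub_nonneg.mpr ht₁)
        (by linarith : (0 : ℝ) ≤ 3 + t))]

lemma norm_sub_norm_le_of_norm_le_one {F : ℂ → ℂ} (hF : DifferentiableOn ℂ F unitDisk)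
    (hF1 : ∀ x ∈ unitDisk, ‖F x‖ ≤ 1) {z w : ℂ} (hz : z ∈ unitDisk) (hw : w ∈ unitDisk) :
    ‖F w‖ - ‖F z‖ ≤ ‖diskMobius w z‖ * (1 - ‖F z‖ * ‖F w‖) := by
  rcases mapsTo_or_eqOn_const hF hF1 with hmaps | ⟨c, hc, hconst⟩
  · exact (norm_sub_norm_le_norm_diskMobius_mul (hmaps hw) (hmaps hz)).trans <|
      mul_le_mul_of_nonneg_right (norm_diskMobius_le_of_mapsTo hF hmaps hw hz)
        (by nlinarith [hF1 z hz, hF1 w hw, norm_nonneg (F z)])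
  · rw [hconst hz, hconst hw, hc]
    simp

variable {f : ℂ → ℂ} {w z : ℂ}

lemma one_sub_fh_mul_sq_le (hf : DifferentiableOn ℂ f unitDisk)
    (hm : MapsTo f unitDisk unitDisk) (hw : w ∈ unitDisk) (hz : z ∈ unitDisk) :
    (1 - fh f z) * (1 - ‖diskMobius w z‖) ^ 2 ≤ 4 * (1 - fh f w) := by
  have hG_le := norm_hypDiffQuot_le_one hf hm hw hz
  have hGw := norm_sub_norm_le_of_norm_le_one (differentiableOn_hypDiffQuot hf hm hw)
    (fun x hx => norm_hypDiffQuot_le_one hf hm hw hx) hz hw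
  have hGz := norm_sub_norm_le_of_norm_le_one (differentiableOn_hypDiffQuot hf hm hz)
    (fun x hx => norm_hypDiffQuot_le_one hf hm hz hx) hz hw
  rw [norm_hypDiffQuot_self hf hm hw] at hGw
  rw [norm_hypDiffQuot_self hf hm hz, ← norm_hypDiffQuot_comm hw hz] at hGz
  exact one_sub_mul_one_sub_sq_le (fh_le_one hf hm hw) (fh_le_one hf hm hz) hG_le
    (norm_nonneg _) (norm_diskMobius_lt_one hw hz).le hGw hGz

lemma one_sub_fh_mul_sq_le_of_norm_le (hf : DifferentiableOn ℂ f unitDisk)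
    (hm : MapsTo f unitDisk unitDisk) {r : ℝ} (hr : r < 1) (hz : ‖z‖ ≤ r)
    (hw : w ∈ unitDisk) :
    (1 - fh f z) * ((1 - r) * (1 - ‖w‖)) ^ 2 ≤ 16 * (1 - fh f w) := by
  have hzD : z ∈ unitDisk := lt_of_le_of_lt hz hr
  have hw' : ‖w‖ < 1 := hw
  have hρ := mul_one_sub_div_two_le_one_sub_norm_diskMobius hw' hzD
  have hrz : (1 - r) * (1 - ‖w‖) ≤ (1 - ‖z‖) * (1 - ‖w‖) :=
    mul_le_mul_of_nonneg_right (by linarith) (by linarith)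
  have hsq : ((1 - r) * (1 - ‖w‖)) ^ 2 ≤ 4 * (1 - ‖diskMobius w z‖) ^ 2 := by
    have := pow_le_pow_left₀ (by nlinarith) (hrz.trans (by linarith : _ ≤ 2 * (1 - ‖diskMobius w z‖))) 2
    linarith
  have hfz : 0 ≤ 1 - fh f z := by linarith [fh_le_one hf hm hzD]
  calc (1 - fh f z) * ((1 - r) * (1 - ‖w‖)) ^ 2
      ≤ (1 - fh f z) * (4 * (1 - ‖diskMobius w z‖) ^ 2) := mul_le_mul_of_nonneg_left hsq hfz
    _ = 4 * ((1 - fh f z) * (1 - ‖diskMobius w z‖) ^ 2) := by ring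
    _ ≤ 16 * (1 - fh f w) := by linarith [one_sub_fh_mul_sq_le hf hm hw hzD]

end Distortion

theorem tendstoLocallyUniformlyOn_fh_one {f : ℕ → ℂ → ℂ}
    (hf : ∀ n, DifferentiableOn ℂ (f n) unitDisk) (hm : ∀ n, MapsTo (f n) unitDisk unitDisk)
    {z : ℕ → ℂ} (hz : ∀ n, z n ∈ unitDisk)
    (ho : Tendsto (fun n => (fh (f n) (z n) - 1) / (1 - ‖z n‖) ^ 2) atTop (𝓝 0)) :
    TendstoLocallyUniformlyOn (fun n => fh (f n)) (fun _ => 1) atTop unitDisk := by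
  rw [tendstoLocallyUniformlyOn_iff_forall_isCompact isOpen_unitDisk]
  intro K hKD hK
  obtain ⟨r, hr, hKr⟩ := exists_lt_subset_ball hK.isClosed (unitDisk_eq_ball ▸ hKD)
  have hbound : Tendsto (fun n => 16 / (1 - r) ^ 2 * -((fh (f n) (z n) - 1) / (1 - ‖z n‖) ^ 2))
      atTop (𝓝 0) := by
    simpa using ho.neg.const_mul (16 / (1 - r) ^ 2)
  rw [Metric.tendstoUniformlyOn_iff]
  intro ε hε
  filter_upwards [hbound.eventually (gt_mem_nhds hε)] with n hn x hx
  have hxr : ‖x‖ ≤ r := (mem_ball_zero_iff.mp (hKr hx)).le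
  have hzn : 0 < 1 - ‖z n‖ := sub_pos.mpr (hz n)
  have h1r : 0 < 1 - r := sub_pos.mpr hr
  rw [Real.dist_eq, abs_of_nonneg (sub_nonneg.mpr (fh_le_one (hf n) (hm n) (hKD hx)))]
  calc 1 - fh (f n) x ≤ 16 * (1 - fh (f n) (z n)) / ((1 - r) * (1 - ‖z n‖)) ^ 2 := by
        rw [le_div_iff₀ (by positivity)]
        exact one_sub_fh_mul_sq_le_of_norm_le (hf n) (hm n) hr hxr (hz n)
    _ = 16 / (1 - r) ^ 2 * -((fh (f n) (z n) - 1) / (1 - ‖z n‖) ^ 2) := by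
        field_simp
        ring
    _ < ε := hn

section Limits

variable {F : ℕ → ℂ → ℂ} {g : ℂ → ℂ}

lemma tendsto_fh_of_tendstoLocallyUniformlyOn (hF : ∀ k, DifferentiableOn ℂ (F k) unitDisk)
    (hFg : TendstoLocallyUniformlyOn F g atTop unitDisk) {x : ℂ} (hx : x ∈ unitDisk)
    (hgx : ‖g x‖ < 1) : Tendsto (fun k => fh (F k) x) atTop (𝓝 (fh g x)) := by
  have hderiv := (hFg.deriv (Eventually.of_forall hF) isOpen_unitDisk).tendsto_at hx
  have hval := hFg.tendsto_at hx
  exact (tendsto_const_nhds.mul hderiv.norm).div (tendsto_const_nhds.sub (hval.norm.pow 2))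
    (by nlinarith [norm_nonneg (g x)])

lemma bijOn_mul_left_unitDisk {c : ℂ} (hc : ‖c‖ = 1) : BijOn (c * ·) unitDisk unitDisk := by
  have hc0 : c ≠ 0 := norm_ne_zero_iff.mp (by rw [hc]; exact one_ne_zero)
  refine InvOn.bijOn (f' := (c⁻¹ * ·)) ⟨fun x _ => inv_mul_cancel_left₀ hc0 x,
    fun x _ => mul_inv_cancel_left₀ hc0 x⟩ ?_ ?_ <;>
  intro x hx <;> simpa [unitDisk, hc] using hx

theorem isDiskAutomorphism_of_fh_eq_one (hg : DifferentiableOn ℂ g unitDisk)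
    (hm : MapsTo g unitDisk unitDisk) {w : ℂ} (hw : w ∈ unitDisk) (h1 : fh g w = 1) :
    IsDiskAutomorphism g := by
  have hgw : ‖g w‖ < 1 := hm hw
  set c := dslope (recenter g w) 0 0
  have hc : ‖c‖ = 1 := by
    rw [← h1, ← norm_hypDiffQuot_self hg hm hw, hypDiffQuot, diskMobius_self]
  have haffine := Complex.affine_of_mapsTo_ball_of_norm_dslope_eq_div
    (unitDisk_eq_ball ▸ differentiableOn_recenter hg hm hw)
    (by rw [recenter_zero]; exact mapsTo_closedBall_recenter hm hw)
    (mem_ball_self one_pos) (by rw [hc, div_one])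
  have hg_eq : EqOn (diskMobius (-g w) ∘ (c * ·) ∘ diskMobius w) g unitDisk := by
    intro z hz
    have := haffine (unitDisk_eq_ball ▸ mapsTo_diskMobius hw hz)
    simp only [recenter_diskMobius hw hz, recenter_zero, sub_zero, zero_add, smul_eq_mul]
      at this
    rw [Function.comp_apply, Function.comp_apply, mul_comm c, ← this]
    exact diskMobius_neg_diskMobius hgw (hm hz)
  exact ⟨hg, ((bijOn_diskMobius (by rwa [norm_neg])).comp
    ((bijOn_mul_left_unitDisk hc).comp (bijOn_diskMobius hw))).congr hg_eq⟩

theorem isDiskAutomorphism_or_eq_const_of_tendstoLocallyUniformlyOn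
    (hF : ∀ k, DifferentiableOn ℂ (F k) unitDisk) (hm : ∀ k, MapsTo (F k) unitDisk unitDisk)
    (hFg : TendstoLocallyUniformlyOn F g atTop unitDisk) {w : ℂ} (hw : w ∈ unitDisk)
    (h1 : Tendsto (fun k => fh (F k) w) atTop (𝓝 1)) :
    IsDiskAutomorphism g ∨ ∃ c : ℂ, ‖c‖ = 1 ∧ ∀ z ∈ unitDisk, g z = c := by
  have hg : DifferentiableOn ℂ g unitDisk :=
    hFg.differentiableOn (Eventually.of_forall hF) isOpen_unitDisk
  have hg1 : ∀ x ∈ unitDisk, ‖g x‖ ≤ 1 := fun x hx =>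
    le_of_tendsto (hFg.tendsto_at hx).norm (Eventually.of_forall fun k => (hm k hx).le)
  rcases mapsTo_or_eqOn_const hg hg1 with hgD | hconst
  · exact Or.inl <| isDiskAutomorphism_of_fh_eq_one hg hgD hw <|
      tendsto_nhds_unique (tendsto_fh_of_tendstoLocallyUniformlyOn hF hFg hw (hgD hw)) h1
  · exact Or.inr hconst

end Limits

end SchwarzPick

theorem sequential_schwarz_pick_general
    (f : ℕ → ℂ → ℂ)
    (hf : ∀ n, DifferentiableOn ℂ (f n) unitDisk)
    (hmaps : ∀ n, Set.MapsTo (f n) unitDisk unitDisk)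
    (z : ℕ → ℂ) (hz : ∀ n, z n ∈ unitDisk)
    (ho : Tendsto (fun n => (fh (f n) (z n) - 1) / (1 - ‖z n‖) ^ 2)
      atTop (𝓝 0)) :
    TendstoLocallyUniformlyOn (fun n z => fh (f n) z) (fun _ => 1) atTop unitDisk ∧
    ∀ (g : ℂ → ℂ) (φ : ℕ → ℕ), StrictMono φ →
      TendstoLocallyUniformlyOn (fun k => f (φ k)) g atTop unitDisk →
      IsDiskAutomorphism g ∨ ∃ w : ℂ, ‖w‖ = 1 ∧ ∀ z ∈ unitDisk, g z = w := by
  have hfh := SchwarzPick.tendstoLocallyUniformlyOn_fh_one hf hmaps hz ho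
  refine ⟨hfh, fun g φ hφ hg => ?_⟩
  exact SchwarzPick.isDiskAutomorphism_or_eq_const_of_tendstoLocallyUniformlyOn
    (fun k => hf (φ k)) (fun k => hmaps (φ k)) hg SchwarzPick.zero_mem_unitDisk
    ((hfh.tendsto_at SchwarzPick.zero_mem_unitDisk).comp hφ.tendsto_atTop)

/-- **The sequential Schwarz–Pick lemma at the boundary.**
If `f_n : 𝔻 → 𝔻` are holomorphic and `f_n^h(z_n) = 1 + o((1-|z_n|)²)` for a sequence
`(z_n)` in `𝔻` with `|z_n| → 1`, then (a) `f_n^h → 1` locally uniformly on `𝔻`, and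
(b) every locally uniform subsequential limit of `(f_n)` is either a disk automorphism
or a unimodular constant. -/
theorem sequential_schwarz_pick
    (f : ℕ → ℂ → ℂ)
    (hf : ∀ n, DifferentiableOn ℂ (f n) unitDisk)
    (hmaps : ∀ n, Set.MapsTo (f n) unitDisk unitDisk)
    (z : ℕ → ℂ) (hz : ∀ n, z n ∈ unitDisk)
    (hz1 : Tendsto (fun n => ‖z n‖) atTop (𝓝 1))
    (ho : Tendsto (fun n => (fh (f n) (z n) - 1) / (1 - ‖z n‖) ^ 2)
      atTop (𝓝 0)) :
    TendstoLocallyUniformlyOn (fun n z => fh (f n) z) (fun _ => 1) atTop unitDisk ∧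
    ∀ (g : ℂ → ℂ) (φ : ℕ → ℕ), StrictMono φ →
      TendstoLocallyUniformlyOn (fun k => f (φ k)) g atTop unitDisk →
      IsDiskAutomorphism g ∨ ∃ w : ℂ, ‖w‖ = 1 ∧ ∀ z ∈ unitDisk, g z = w :=
  sequential_schwarz_pick_general f hf hmaps z hz ho
end
end

section
/- Let c ≥ 4 and r ∈ (0,1), and define v_r : 𝔻 → ℝ by v_r(z) := (1-|z|²)^{c/2} · e^{(1-|z|²)/r²}. Then for all z with r ≤ |z| < 1: Δv_r(z) ≥ (2c/(1-|z|²)²) · v_r(z), where Δ is the Laplacian. -/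
open Complex Filter MeasureTheory Metric Set Topology

noncomputable section

/-!
For a radial function `u = f(|z|²)` one has `Δu = 4 f'(t) + 4 t f''(t)` with `t = |z|²`. Writing
`s = 1 - t`, `a = c/2`, `k = r²` and `p = a/s + 1/k`, the profile `f = s^a e^{s/k}` satisfies
`f' = -p f` and `f'' = (p² - a/s²) f`, so the claim reduces to `t p² - p ≥ (1 + t) a/s²`.
Using `t/k ≥ 1` (that is, `|z| ≥ r`) twice, `t p² - p ≥ t a²/s² + a/s`, and the difference of the
two sides is then at least `a t (a - 2)/s²`, which is nonnegative since `c ≥ 4`.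
-/

open scoped RealInnerProductSpace

section RadialLaplacian

variable {E : Type*} [NormedAddCommGroup E] [InnerProductSpace ℝ E] {f f' : ℝ → ℝ} {f'' : ℝ}

lemma fderiv_comp_norm_sq_apply {w : E} (hf : HasDerivAt f (f' (‖w‖ ^ 2)) (‖w‖ ^ 2)) (v : E) :
    fderiv ℝ (fun w => f (‖w‖ ^ 2)) w v = f' (‖w‖ ^ 2) * (2 * ⟪v, w⟫) := by
  have h : HasFDerivAt (fun w => f (‖w‖ ^ 2)) _ w :=
    hf.comp_hasFDerivAt w (hasStrictFDerivAt_norm_sq w).hasFDerivAt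
  simp [h.fderiv, real_inner_comm]

lemma fderiv_fderiv_comp_norm_sq_apply {z : E}
    (hf : ∀ᶠ s in 𝓝 (‖z‖ ^ 2), HasDerivAt f (f' s) s) (hf' : HasDerivAt f' f'' (‖z‖ ^ 2))
    (v : E) :
    fderiv ℝ (fun w => fderiv ℝ (fun w => f (‖w‖ ^ 2)) w v) z v
      = 4 * f'' * ⟪v, z⟫ ^ 2 + 2 * f' (‖z‖ ^ 2) * ‖v‖ ^ 2 := by
  have hfirst : (fun w => fderiv ℝ (fun w => f (‖w‖ ^ 2)) w v)
      =ᶠ[𝓝 z] fun w => f' (‖w‖ ^ 2) * (2 * ⟪v, w⟫) :=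
    ((continuous_norm.pow 2).tendsto z).eventually hf |>.mono
      fun w hw => fderiv_comp_norm_sq_apply hw v
  have hderiv : HasFDerivAt (fun w => f' (‖w‖ ^ 2) * (2 * ⟪v, w⟫)) _ z :=
    (hf'.comp_hasFDerivAt z (hasStrictFDerivAt_norm_sq z).hasFDerivAt).mul
      (((innerSL ℝ v).hasFDerivAt (x := z)).const_mul 2)
  rw [hfirst.fderiv_eq, hderiv.fderiv]
  simp only [Function.comp_apply, real_inner_comm, add_apply, smul_apply, coe_innerSL_apply,
    real_inner_self_eq_norm_sq, smul_eq_mul, nsmul_eq_mul, Nat.cast_ofNat]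
  ring

lemma lap_comp_norm_sq {z : ℂ} (hf : ∀ᶠ s in 𝓝 (‖z‖ ^ 2), HasDerivAt f (f' s) s)
    (hf' : HasDerivAt f' f'' (‖z‖ ^ 2)) :
    lap (fun w => f (‖w‖ ^ 2)) z = 4 * f' (‖z‖ ^ 2) + 4 * ‖z‖ ^ 2 * f'' := by
  rw [lap, fderiv_fderiv_comp_norm_sq_apply hf hf', fderiv_fderiv_comp_norm_sq_apply hf hf',
    Complex.sq_norm, Complex.normSq_apply]
  simp only [Complex.inner, map_one, mul_one, norm_one, one_pow, conj_I, mul_neg, neg_re, mul_re,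
    I_re, mul_zero, I_im, zero_sub, neg_neg, norm_I]
  ring

end RadialLaplacian

section Profile

variable {a k t : ℝ}

def profile (a k t : ℝ) : ℝ := (1 - t) ^ a * Real.exp ((1 - t) / k)

lemma hasDerivAt_one_sub (t : ℝ) : HasDerivAt (fun t : ℝ => 1 - t) (-1) t := by
  simpa using (hasDerivAt_id t).const_sub 1

lemma hasDerivAt_profile (ht : t < 1) :
    HasDerivAt (profile a k) (-(a / (1 - t) + 1 / k) * profile a k t) t := by
  have hs : 1 - t ≠ 0 := by linarith
  refine (((Real.hasDerivAt_rpow_const (p := a) (Or.inl hs)).comp t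
    (hasDerivAt_one_sub t)).mul ((hasDerivAt_one_sub t).div_const k).exp).congr_deriv ?_
  simp only [profile, Real.rpow_sub_one hs, Function.comp_apply]
  field_simp
  ring

lemma hasDerivAt_profile_deriv (ht : t < 1) :
    HasDerivAt (fun t => -(a / (1 - t) + 1 / k) * profile a k t)
      (((a / (1 - t) + 1 / k) ^ 2 - a / (1 - t) ^ 2) * profile a k t) t := by
  have hs : 1 - t ≠ 0 := by linarith
  have hrate : HasDerivAt (fun t => a / (1 - t) + 1 / k) (a / (1 - t) ^ 2) t :=
    (((hasDerivAt_const t a).div (hasDerivAt_one_sub t) hs).add_const (1 / k)).congr_deriv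
      (by ring)
  exact (hrate.neg.mul (hasDerivAt_profile ht)).congr_deriv (by simp only [Pi.neg_apply]; ring)

lemma supersolution_inequality (ha : 2 ≤ a) (hk : 0 < k) (hkt : k ≤ t) (ht : t < 1) {F : ℝ}
    (hF : 0 ≤ F) :
    4 * a / (1 - t) ^ 2 * F
      ≤ 4 * (-(a / (1 - t) + 1 / k) * F)
        + 4 * t * (((a / (1 - t) + 1 / k) ^ 2 - a / (1 - t) ^ 2) * F) := by
  have hs : 0 < 1 - t := by linarith
  have htq : 1 ≤ t * (1 / k) := by rw [mul_one_div, le_div_iff₀ hk]; linarith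
  set p := a / (1 - t) with hp_def
  set q := 1 / k
  have hp : 0 ≤ p := by positivity
  have hq : 0 ≤ q := by positivity
  have hB : 0 ≤ -(p + q) + t * ((p + q) ^ 2 - a / (1 - t) ^ 2) - a / (1 - t) ^ 2 :=
    calc 0 ≤ a * t * (a - 2) / (1 - t) ^ 2 := by
          have : 0 ≤ t := by linarith
          have : 0 ≤ a - 2 := by linarith
          positivity
      _ = t * p ^ 2 + p - (1 + t) * (a / (1 - t) ^ 2) := by rw [hp_def]; field_simp; ring
      _ ≤ (p + q) * (t * p) - (1 + t) * (a / (1 - t) ^ 2) := by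
          nlinarith [mul_le_mul_of_nonneg_right htq hp]
      _ ≤ (p + q) * (t * (p + q) - 1) - (1 + t) * (a / (1 - t) ^ 2) := by
          gcongr
          linarith
      _ = -(p + q) + t * ((p + q) ^ 2 - a / (1 - t) ^ 2) - a / (1 - t) ^ 2 := by ring
  linear_combination 4 * mul_nonneg hF hB

end Profile

theorem vr_supersolution_general
    (c r : ℝ) (hc : 4 ≤ c) (hr : 0 < r) :
    ∀ z : ℂ, r ≤ ‖z‖ → ‖z‖ < 1 →
      2 * c / (1 - ‖z‖ ^ 2) ^ 2 *
          ((1 - ‖z‖ ^ 2) ^ (c / 2) * Real.exp ((1 - ‖z‖ ^ 2) / r ^ 2))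
        ≤ lap (fun w => (1 - ‖w‖ ^ 2) ^ (c / 2) *
            Real.exp ((1 - ‖w‖ ^ 2) / r ^ 2)) z := by
  intro z hrz hz
  have ht : ‖z‖ ^ 2 < 1 := pow_lt_one₀ (norm_nonneg z) hz two_ne_zero
  have hkt : r ^ 2 ≤ ‖z‖ ^ 2 := pow_le_pow_left₀ hr.le hrz 2
  have hlap := lap_comp_norm_sq (f := profile (c / 2) (r ^ 2))
    ((eventually_lt_nhds ht).mono fun s hs => hasDerivAt_profile hs)
    (hasDerivAt_profile_deriv ht)
  have hF : 0 ≤ profile (c / 2) (r ^ 2) (‖z‖ ^ 2) :=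
    mul_nonneg (Real.rpow_nonneg (by linarith) _) (Real.exp_pos _).le
  have key := supersolution_inequality (a := c / 2) (by linarith) (by positivity) hkt ht hF
  rw [show 4 * (c / 2) = 2 * c by ring, ← hlap] at key
  exact key

/-- **An explicit supersolution of the linearized curvature inequality.**
For `c ≥ 4` and `r ∈ (0,1)`, the function `v_r(z) = (1-|z|²)^{c/2}·e^{(1-|z|²)/r²}`
satisfies `Δv_r(z) ≥ (2c/(1-|z|²)²)·v_r(z)` on the annulus `r ≤ |z| < 1`. -/
theorem vr_supersolution
    (c r : ℝ) (hc : 4 ≤ c) (hr : 0 < r) (hr1 : r < 1) :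
    ∀ z : ℂ, r ≤ ‖z‖ → ‖z‖ < 1 →
      2 * c / (1 - ‖z‖ ^ 2) ^ 2 *
          ((1 - ‖z‖ ^ 2) ^ (c / 2) * Real.exp ((1 - ‖z‖ ^ 2) / r ^ 2))
        ≤ lap (fun w => (1 - ‖w‖ ^ 2) ^ (c / 2) *
            Real.exp ((1 - ‖w‖ ^ 2) / r ^ 2)) z :=
  vr_supersolution_general c r hc hr
end
end
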